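/- arXiv:2001.00751 — 4 statements merged into one kernel-verified Lean document; each statement's English description precedes it below -/
import Mathlib

section
/- Let X be a compact Hausdorff space, Y a topological space, and h : Y → X a continuous map. Consider the subgroup G of C(Y, ℤ) generated by all functions of the form y ↦ rank(p(h(y))), where n ranges over the natural numbers and p ranges over continuous functions X → M_n(ℂ) such that p(x) is a projection (p(x)² = p(x) = p(x)*) for every x ∈ X. Then G equals the set {f ∘ h : f ∈ C(X, ℤ)}. -/
/-!
The rank of an idempotent matrix is its trace, so the rank of a continuous family of projections
is a continuous, hence locally constant, integer-valued function. Conversely, on a compact space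
a continuous `f : X → ℤ` takes finitely many values, so it is an integer combination of
`{0, 1}`-valued continuous functions, and each of these is the rank of a `1 × 1` projection.
-/

open Matrix

theorem Matrix.trace_eq_rank_of_isIdempotentElem {K n : Type*} [Field K] [Fintype n]
    [DecidableEq n] {A : Matrix n n K} (hA : IsIdempotentElem A) : A.trace = A.rank := by
  have hA' : IsIdempotentElem (toLin' A) := hA.map toLinAlgEquiv'
  rw [← trace_toLin'_eq, (LinearMap.IsIdempotentElem.isProj_range _ hA').trace]
  rfl

theorem Continuous.matrix_rank_of_isIdempotentElem {X n : Type*} [TopologicalSpace X]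
    [Fintype n] [DecidableEq n] {p : X → Matrix n n ℂ} (hp : Continuous p)
    (hidem : ∀ x, IsIdempotentElem (p x)) : Continuous fun x => (p x).rank := by
  have hcast : Topology.IsEmbedding (fun k : ℕ => (k : ℂ)) :=
    Complex.isometry_ofReal.isEmbedding.comp Nat.isClosedEmbedding_coe_real.isEmbedding
  refine hcast.continuous_iff.mpr ?_
  simp only [Function.comp_def, ← trace_eq_rank_of_isIdempotentElem (hidem _)]
  exact hp.matrix_trace

theorem ContinuousMap.addSubgroup_closure_zero_or_one_eq_top {X : Type*} [TopologicalSpace X]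
    [CompactSpace X] : AddSubgroup.closure {f : C(X, ℤ) | ∀ x, f x = 0 ∨ f x = 1} = ⊤ := by
  classical
  refine eq_top_iff.mpr fun f _ => ?_
  let level (k : ℤ) : C(X, ℤ) :=
    .comp ⟨fun t => if t = k then 1 else 0, continuous_of_discreteTopology⟩ f
  have hfin : (Set.range f).Finite := (isCompact_range f.continuous).finite_of_discrete
  have hf : f = ∑ k ∈ hfin.toFinset, k • level k := by
    ext x
    simp [level, Finset.sum_apply]
  rw [hf]
  refine AddSubgroup.sum_mem _ fun k _ => AddSubgroup.zsmul_mem _ (AddSubgroup.subset_closure ?_) k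
  intro x
  by_cases hx : f x = k <;> simp [level, hx]

theorem ContinuousMap.exists_projection_rank_eq_of_zero_or_one {X : Type*} [TopologicalSpace X]
    (f : C(X, ℤ)) (hf : ∀ x, f x = 0 ∨ f x = 1) :
    ∃ p : C(X, Matrix (Fin 1) (Fin 1) ℂ),
      (∀ x, p x * p x = p x ∧ (p x)ᴴ = p x) ∧ ∀ x, ((p x).rank : ℤ) = f x := by
  refine ⟨.comp ⟨Int.cast, continuous_of_discreteTopology⟩ f, fun x => ?_, fun x => ?_⟩ <;>
    rcases hf x with hx | hx <;> simp [hx]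

theorem stmt2_general {X Y : Type*} [TopologicalSpace X] [CompactSpace X]
    [TopologicalSpace Y] (h : C(Y, X)) :
    (AddSubgroup.closure
        {g : C(Y, ℤ) | ∃ (n : ℕ) (p : C(X, Matrix (Fin n) (Fin n) ℂ)),
          (∀ x : X, p x * p x = p x ∧ (p x)ᴴ = p x) ∧
          ∀ y : Y, g y = ((p (h y)).rank : ℤ)} : Set C(Y, ℤ))
      = {g : C(Y, ℤ) | ∃ f : C(X, ℤ), g = f.comp h} := by
  let pullback : C(X, ℤ) →+ C(Y, ℤ) := ContinuousMap.compAddMonoidHom' h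
  suffices AddSubgroup.closure _ = pullback.range by
    rw [this]
    ext g
    simp [pullback, eq_comm]
  apply le_antisymm
  · rw [AddSubgroup.closure_le]
    rintro g ⟨n, p, hp, hg⟩
    have hrank : Continuous fun x => ((p x).rank : ℤ) :=
      continuous_of_discreteTopology.comp
        (p.continuous.matrix_rank_of_isIdempotentElem fun x => (hp x).1)
    exact ⟨⟨_, hrank⟩, ContinuousMap.ext fun y => (hg y).symm⟩
  · rw [AddMonoidHom.range_eq_map, ← ContinuousMap.addSubgroup_closure_zero_or_one_eq_top,
      AddMonoidHom.map_closure]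
    refine AddSubgroup.closure_mono ?_
    rintro _ ⟨f, hf, rfl⟩
    obtain ⟨p, hp, hrank⟩ := f.exists_projection_rank_eq_of_zero_or_one hf
    exact ⟨1, p, hp, fun y => (hrank (h y)).symm⟩

/-- For `X` compact Hausdorff, `Y` a topological space and `h : Y → X`
continuous, the subgroup of `C(Y, ℤ)` generated by the functions
`y ↦ rank (p (h y))`, where `p` ranges over continuous projection-valued functions
`X → M_n(ℂ)`, equals `{f ∘ h : f ∈ C(X, ℤ)}`. -/
theorem stmt2 {X Y : Type*} [TopologicalSpace X] [CompactSpace X] [T2Space X]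
    [TopologicalSpace Y] (h : C(Y, X)) :
    (AddSubgroup.closure
        {g : C(Y, ℤ) | ∃ (n : ℕ) (p : C(X, Matrix (Fin n) (Fin n) ℂ)),
          (∀ x : X, p x * p x = p x ∧ (p x)ᴴ = p x) ∧
          ∀ y : Y, g y = ((p (h y)).rank : ℤ)} : Set C(Y, ℤ))
      = {g : C(Y, ℤ) | ∃ f : C(X, ℤ), g = f.comp h} :=
  stmt2_general h
end

section
/- Let k, ℓ ∈ ℕ with k ≤ ℓ and let E be an ℓ × k matrix with integer entries. Let d be the greatest common divisor of the set of determinants of all full square submatrices of E, i.e., of all k × k matrices obtained from E by selecting k of its ℓ rows (via a strictly increasing injection from {1,…,k} into {1,…,ℓ}) and keeping all columns. Then there exists a k × ℓ integer matrix K such that K·E = d·I_k, where I_k is the k × k identity matrix. -/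
/-!
Selecting the rows `ρ` of `E` and then multiplying by the adjugate of the square block
`E_ρ` is a left inverse of `E` up to the factor `det E_ρ`. Over `ℤ`, Bézout writes the gcd `d`
of these minors as an integer combination of them, and the same combination of these left
inverses is a `K` with `K * E = d • 1`.
-/

namespace Matrix

theorem one_submatrix_id_mul {l m n R : Type*} [Fintype l] [DecidableEq l] [NonAssocSemiring R]
    (E : Matrix l m R) (ρ : n → l) :
    (1 : Matrix l l R).submatrix ρ id * E = E.submatrix ρ id := by
  simpa using (submatrix_mul 1 E ρ id id Function.bijective_id).symm

variable {l m R : Type*} [Fintype l] [Fintype m] [DecidableEq l] [DecidableEq m] [CommRing R]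

theorem adjugate_submatrix_mul_one_submatrix_id_mul (E : Matrix l m R) (ρ : m → l) :
    (E.submatrix ρ id).adjugate * (1 : Matrix l l R).submatrix ρ id * E
      = (E.submatrix ρ id).det • (1 : Matrix m m R) := by
  rw [Matrix.mul_assoc, one_submatrix_id_mul, adjugate_mul]

theorem exists_mul_eq_sum_det_submatrix_mul_smul_one {ι : Type*} (E : Matrix l m R)
    (s : Finset ι) (ρ : ι → m → l) (c : ι → R) :
    ∃ K : Matrix m l R,
      K * E = (∑ i ∈ s, (E.submatrix (ρ i) id).det * c i) • (1 : Matrix m m R) := by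
  refine ⟨∑ i ∈ s,
    c i • ((E.submatrix (ρ i) id).adjugate * (1 : Matrix l l R).submatrix (ρ i) id), ?_⟩
  simp only [Matrix.sum_mul, Matrix.smul_mul, adjugate_submatrix_mul_one_submatrix_id_mul,
    smul_smul, Finset.sum_smul, mul_comm]

end Matrix

theorem stmt3_general {k ℓ : ℕ} (E : Matrix (Fin ℓ) (Fin k) ℤ) (d : ℤ)
    (hd : d = Finset.gcd
        (Finset.univ.filter (fun ρ : Fin k ↪ Fin ℓ => StrictMono ρ))
        (fun ρ => (E.submatrix ρ id).det)) :
    ∃ K : Matrix (Fin k) (Fin ℓ) ℤ, K * E = d • (1 : Matrix (Fin k) (Fin k) ℤ) := by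
  obtain ⟨c, hc⟩ := Finset.gcd_eq_sum_mul
    (Finset.univ.filter (fun ρ : Fin k ↪ Fin ℓ => StrictMono ρ))
    (fun ρ => (E.submatrix ρ id).det)
  rw [hd, hc]
  exact Matrix.exists_mul_eq_sum_det_submatrix_mul_smul_one E _
    (fun ρ : Fin k ↪ Fin ℓ => ⇑ρ) c

/-- For an `ℓ × k` integer matrix `E` with `k ≤ ℓ`, if `d` is the gcd of
the determinants of all full square submatrices of `E` (selected by strictly increasing
injections of rows), then there is a `k × ℓ` integer matrix `K` with `K * E = d • I`. -/
theorem stmt3 {k ℓ : ℕ} (hkl : k ≤ ℓ) (E : Matrix (Fin ℓ) (Fin k) ℤ) (d : ℤ)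
    (hd : d = Finset.gcd
        (Finset.univ.filter (fun ρ : Fin k ↪ Fin ℓ => StrictMono ρ))
        (fun ρ => (E.submatrix ρ id).det)) :
    ∃ K : Matrix (Fin k) (Fin ℓ) ℤ, K * E = d • (1 : Matrix (Fin k) (Fin k) ℤ) :=
  stmt3_general E d hd
end

section
/- Let k, ℓ ∈ ℕ with k ≤ ℓ and let E be an ℓ × k integer matrix. Let h : ℤ^k → ℤ^ℓ be the group homomorphism h(X) = E·X and let H = range(h). Then the following are equivalent: (1) there exists a k × ℓ integer matrix K with K·E = I_k; (2) the quotient group ℤ^ℓ/H is torsion free and h is injective; (3) the greatest common divisor of the determinants of all full square submatrices of E equals 1. -/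
/-!
(1) ⇔ (2): the cokernel `ℤ^ℓ ⧸ H` is finitely generated, so when it is torsion free it is free,
hence projective, and the exact sequence `0 → ℤ^k → ℤ^ℓ → ℤ^ℓ ⧸ H → 0` splits.

(1) ⇔ (3) holds over any commutative ring once the gcd is replaced by the ideal generated by the
maximal minors. If `K * E = 1`, then over every residue field `R ⧸ m` the matrix `E` stays
left invertible, so it has a maximal minor outside `m`; the minors therefore lie in no maximal
ideal. Conversely, from `∑ c_ρ det E_ρ = 1` the matrix `∑ c_ρ adj(E_ρ) P_ρ`, with `P_ρ` the
row selection `P_ρ * E = E_ρ`, is a left inverse. Over `ℤ` that ideal is the unit ideal exactly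
when the gcd of the minors is `1` (Bézout).
-/

open Matrix

theorem Finset.gcd_eq_one_iff_span_eq_top {R ι : Type*} [CommRing R] [IsBezout R]
    [NormalizedGCDMonoid R] (s : Finset ι) (f : ι → R) :
    s.gcd f = 1 ↔ Ideal.span (f '' s) = ⊤ := by
  refine ⟨fun h => ?_, fun h => ?_⟩
  · obtain ⟨g, hg⟩ := s.gcd_eq_sum_mul f
    rw [Ideal.eq_top_iff_one, ← h, hg]
    exact Ideal.sum_mem _ fun i hi => Ideal.mul_mem_right _ _ (Ideal.subset_span ⟨i, hi, rfl⟩)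
  · have hle : Ideal.span (f '' s) ≤ Ideal.span {s.gcd f} :=
      Ideal.span_le.mpr <| by
        rintro _ ⟨i, hi, rfl⟩
        exact Ideal.mem_span_singleton.mpr (Finset.gcd_dvd hi)
    have hdvd : s.gcd f ∣ 1 := by
      rw [← Ideal.mem_span_singleton]
      exact hle ((Ideal.eq_top_iff_one _).mp h)
    rw [← s.normalize_gcd, normalize_eq_one]
    exact isUnit_of_dvd_one hdvd

theorem Submodule.isTorsionFree_int_quotient_iff {M : Type*} [AddCommGroup M]
    (H : Submodule ℤ M) :
    Module.IsTorsionFree ℤ (M ⧸ H) ↔ ∀ (y : M) (n : ℕ), 0 < n → (n : ℤ) • y ∈ H → y ∈ H := by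
  rw [Module.isTorsionFree_int_iff_isAddTorsionFree]
  refine ⟨fun h y n hn hy => ?_, fun h => ⟨fun n hn a b hab => ?_⟩⟩
  · rw [← Submodule.Quotient.mk_eq_zero]
    refine nsmul_right_injective hn.ne' ?_
    change n • (Submodule.Quotient.mk y : M ⧸ H) = n • 0
    rw [smul_zero, ← Submodule.Quotient.mk_smul, ← natCast_zsmul,
      (Submodule.Quotient.mk_eq_zero H).mpr hy]
  · induction a using Submodule.Quotient.induction_on
    induction b using Submodule.Quotient.induction_on
    rw [Submodule.Quotient.eq]
    refine h _ n (Nat.pos_of_ne_zero hn) ?_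
    rwa [smul_sub, ← Submodule.Quotient.eq, natCast_zsmul, natCast_zsmul,
      Submodule.Quotient.mk_smul, Submodule.Quotient.mk_smul]

theorem LinearMap.exists_leftInverse_iff {R M N : Type*} [CommRing R] [IsDomain R]
    [IsPrincipalIdealRing R] [AddCommGroup M] [Module R M] [AddCommGroup N] [Module R N]
    [Module.Finite R N] [Module.IsTorsionFree R N] (f : M →ₗ[R] N) :
    (∃ g : N →ₗ[R] M, g ∘ₗ f = LinearMap.id) ↔
      Function.Injective f ∧ Module.IsTorsionFree R (N ⧸ LinearMap.range f) := by
  constructor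
  · rintro ⟨g, hg⟩
    have hgf (x : M) : g (f x) = x := LinearMap.congr_fun hg x
    refine ⟨Function.LeftInverse.injective hgf,
      Module.IsTorsionFree.of_smul_eq_zero fun r q hrq => or_iff_not_imp_left.mpr fun hr => ?_⟩
    induction q using Submodule.Quotient.induction_on with | _ y
    rw [← Submodule.Quotient.mk_smul, Submodule.Quotient.mk_eq_zero] at hrq
    obtain ⟨x, hx⟩ := hrq
    have hxy : x = r • g y := by rw [← hgf x, hx, map_smul]
    have hy : r • (y - f (g y)) = 0 := by rw [smul_sub, ← map_smul, ← hxy, hx, sub_self]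
    rw [Submodule.Quotient.mk_eq_zero]
    exact ⟨g y, (sub_eq_zero.mp ((smul_eq_zero_iff_right hr).mp hy)).symm⟩
  · rintro ⟨hf, _⟩
    have hsplit := (Function.Exact.split_tfae f.exact_map_mkQ_range hf
      (Submodule.mkQ_surjective _)).out 0 1
    exact hsplit.mp (Module.projective_lifting_property _ _ (Submodule.mkQ_surjective _))

namespace Matrix

variable {R : Type*} [CommRing R] {k ℓ : ℕ}

def maxMinorsIdeal (E : Matrix (Fin ℓ) (Fin k) R) : Ideal R :=
  Ideal.span ((fun ρ : Fin k ↪ Fin ℓ => (E.submatrix ρ id).det) '' {ρ | StrictMono ρ})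

theorem exists_strictMono_det_submatrix_ne_zero {K : Type*} [Field K]
    (M : Matrix (Fin ℓ) (Fin k) K) (hM : Function.Injective M.mulVec) :
    ∃ ρ : Fin k ↪ Fin ℓ, StrictMono ρ ∧ (M.submatrix ρ id).det ≠ 0 := by
  classical
  obtain ⟨b, -, -, hb_span, hb⟩ :=
    exists_linearIndepOn_extension (linearIndepOn_empty K M.row) (Set.empty_subset Set.univ)
  have hrows : Submodule.span K (Set.range M.row) = ⊤ := by
    apply Submodule.eq_top_of_finrank_eq
    rw [← M.rank_eq_finrank_span_row, Matrix.rank,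
      LinearMap.finrank_range_of_inj (f := M.mulVecLin) hM]
  have hb_top : ⊤ ≤ Submodule.span K (Set.range fun i : b => M.row i) := by
    rw [← hrows, ← Set.image_univ, ← Set.image_eq_range]
    exact Submodule.span_le.mpr hb_span
  have hcard : b.toFinset.card = k := by
    rw [Set.toFinset_card, ← Module.finrank_eq_card_basis (Module.Basis.mk hb hb_top),
      Module.finrank_fin_fun]
  let ρ := b.toFinset.orderEmbOfFin hcard
  refine ⟨ρ.toEmbedding, ρ.strictMono, ?_⟩
  have hρ : LinearIndependent K (M.submatrix ρ id) :=
    hb.comp (fun i => ⟨ρ i, Set.mem_toFinset.mp (b.toFinset.orderEmbOfFin_mem hcard i)⟩)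
      fun _ _ h => by simpa using h
  exact ((isUnit_iff_isUnit_det _).mp (linearIndependent_rows_iff_isUnit.mp hρ)).ne_zero

theorem maxMinorsIdeal_eq_top_of_mul_eq_one {E : Matrix (Fin ℓ) (Fin k) R}
    {K : Matrix (Fin k) (Fin ℓ) R} (hKE : K * E = 1) : E.maxMinorsIdeal = ⊤ := by
  by_contra hne
  obtain ⟨m, hm, hle⟩ := Ideal.exists_le_maximal _ hne
  let _ := Ideal.Quotient.field m
  let π := Ideal.Quotient.mk m
  have hinj : Function.Injective (E.map π).mulVec :=
    Function.LeftInverse.injective (g := (K.map π).mulVec) fun v => by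
      rw [mulVec_mulVec, ← Matrix.map_mul, hKE, Matrix.map_one _ π.map_zero π.map_one,
        one_mulVec]
  obtain ⟨ρ, hρ, hdet⟩ := exists_strictMono_det_submatrix_ne_zero _ hinj
  refine hdet ?_
  change (π.mapMatrix (E.submatrix ρ id)).det = 0
  rw [← RingHom.map_det, Ideal.Quotient.eq_zero_iff_mem]
  exact hle (Ideal.subset_span ⟨ρ, hρ, rfl⟩)

theorem exists_mul_eq_one_of_maxMinorsIdeal_eq_top {E : Matrix (Fin ℓ) (Fin k) R}
    (hE : E.maxMinorsIdeal = ⊤) : ∃ K : Matrix (Fin k) (Fin ℓ) R, K * E = 1 := by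
  obtain ⟨c, hc⟩ := (Fintype.mem_span_image_iff_exists_fun R).mp
    ((Ideal.eq_top_iff_one _).mp hE)
  let P (ρ : Fin k ↪ Fin ℓ) : Matrix (Fin k) (Fin ℓ) R := (1 : Matrix (Fin ℓ) (Fin ℓ) R).submatrix ρ id
  have hP (ρ : Fin k ↪ Fin ℓ) : P ρ * E = E.submatrix ρ id := one_submatrix_mul ρ (Equiv.refl _) E
  refine ⟨∑ ρ, c ρ • ((E.submatrix ρ.1 id).adjugate * P ρ), ?_⟩
  simp_rw [Matrix.sum_mul, smul_mul, Matrix.mul_assoc, hP, adjugate_mul, smul_smul,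
    ← Finset.sum_smul]
  simp only [smul_eq_mul] at hc
  rw [hc, one_smul]

theorem exists_mul_eq_one_iff_maxMinorsIdeal_eq_top (E : Matrix (Fin ℓ) (Fin k) R) :
    (∃ K : Matrix (Fin k) (Fin ℓ) R, K * E = 1) ↔ E.maxMinorsIdeal = ⊤ :=
  ⟨fun ⟨_, hKE⟩ => maxMinorsIdeal_eq_top_of_mul_eq_one hKE,
    exists_mul_eq_one_of_maxMinorsIdeal_eq_top⟩

theorem exists_mul_eq_one_iff_exists_comp_mulVecLin_eq_id {m n : Type*} [Fintype m] [Fintype n]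
    [DecidableEq m] [DecidableEq n] (E : Matrix m n R) :
    (∃ K : Matrix n m R, K * E = 1) ↔ ∃ g : (m → R) →ₗ[R] n → R, g ∘ₗ E.mulVecLin = .id := by
  rw [Matrix.toLin'.surjective.exists]
  simp only [← Matrix.toLin'_apply', ← Matrix.toLin'_mul, ← Matrix.toLin'_one,
    Matrix.toLin'.injective.eq_iff]

end Matrix

theorem stmt5_general {k ℓ : ℕ} (E : Matrix (Fin ℓ) (Fin k) ℤ) :
    List.TFAE
      [ ∃ K : Matrix (Fin k) (Fin ℓ) ℤ, K * E = (1 : Matrix (Fin k) (Fin k) ℤ),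
        (∀ (Y : Fin ℓ → ℤ) (n : ℕ), 0 < n →
            (n : ℤ) • Y ∈ Set.range E.mulVec → Y ∈ Set.range E.mulVec) ∧
          Function.Injective (E.mulVec : (Fin k → ℤ) → (Fin ℓ → ℤ)),
        Finset.gcd (Finset.univ.filter (fun ρ : Fin k ↪ Fin ℓ => StrictMono ρ))
          (fun ρ => (E.submatrix ρ id).det) = 1 ] := by
  tfae_have 1 ↔ 2 := by
    rw [exists_mul_eq_one_iff_exists_comp_mulVecLin_eq_id, LinearMap.exists_leftInverse_iff,
      Submodule.isTorsionFree_int_quotient_iff, and_comm]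
    rfl
  tfae_have 1 ↔ 3 := by
    rw [exists_mul_eq_one_iff_maxMinorsIdeal_eq_top, Finset.gcd_eq_one_iff_span_eq_top,
      Finset.coe_filter_univ]
    rfl
  tfae_finish

/-- For an `ℓ × k` integer matrix `E` with `k ≤ ℓ`, with
`h : ℤ^k → ℤ^ℓ`, `h X = E.mulVec X` and `H = range h`, the following are equivalent:
(1) `E` has a left inverse integer matrix `K` with `K * E = I`;
(2) `ℤ^ℓ / H` is torsion free and `h` is injective;
(3) the gcd of the determinants of all full square submatrices of `E` is `1`. -/
theorem stmt5 {k ℓ : ℕ} (hkl : k ≤ ℓ) (E : Matrix (Fin ℓ) (Fin k) ℤ) :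
    List.TFAE
      [ ∃ K : Matrix (Fin k) (Fin ℓ) ℤ, K * E = (1 : Matrix (Fin k) (Fin k) ℤ),
        (∀ (Y : Fin ℓ → ℤ) (n : ℕ), 0 < n →
            (n : ℤ) • Y ∈ Set.range E.mulVec → Y ∈ Set.range E.mulVec) ∧
          Function.Injective (E.mulVec : (Fin k → ℤ) → (Fin ℓ → ℤ)),
        Finset.gcd (Finset.univ.filter (fun ρ : Fin k ↪ Fin ℓ => StrictMono ρ))
          (fun ρ => (E.submatrix ρ id).det) = 1 ] :=
  stmt5_general E
end

section
/- Let k, ℓ ∈ ℕ with k ≤ ℓ and let E be an ℓ × k integer matrix. Then there exists a k × ℓ integer matrix K with K·E = I_k if and only if the greatest common divisor of the determinants of all full square submatrices of E equals 1. -/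
/-!
If `K * E = 1`, expanding `det (K * E)` multilinearly in the rows of `E` writes `1` as a
combination of `k × k` row-minors of `E`; those with a repeated row vanish and the others are
`± det` of a minor with increasing rows, so every common divisor of the latter divides `1`.
Conversely, Bézout writes `1 = ∑ det E_ρ * c ρ`, and then `∑ c ρ • adj E_ρ * P_ρ` is a left
inverse of `E`, where `P_ρ` is the row selection with `P_ρ * E = E_ρ`.
-/

open Matrix

namespace Matrix

variable {R : Type*} [CommRing R]

theorem det_mul_eq_sum_prod_mul_det_submatrix {m n : Type*} [Fintype m] [DecidableEq m]
    [Fintype n] (K : Matrix m n R) (E : Matrix n m R) :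
    (K * E).det = ∑ f : m → n, (∏ i, K i (f i)) * (E.submatrix f id).det := by
  have hrows : (K * E).det = detRowAlternating.toMultilinearMap fun i => ∑ l, K i l • E l := by
    congr 1
    ext i j
    simp [mul_apply]
  rw [hrows, MultilinearMap.map_sum]
  refine Finset.sum_congr rfl fun f _ => ?_
  rw [MultilinearMap.map_smul_univ, smul_eq_mul]
  rfl

theorem dvd_det_submatrix_of_forall_strictMono {k : ℕ} {α : Type*} [LinearOrder α]
    {E : Matrix α (Fin k) R} {d : R}
    (hd : ∀ ρ : Fin k → α, StrictMono ρ → d ∣ (E.submatrix ρ id).det) (f : Fin k → α) :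
    d ∣ (E.submatrix f id).det := by
  by_cases hf : f.Injective
  · have hmono : StrictMono (f ∘ Tuple.sort f) :=
      (Tuple.monotone_sort f).strictMono_of_injective (hf.comp (Tuple.sort f).injective)
    have hperm : E.submatrix f id =
        (E.submatrix (f ∘ Tuple.sort f) id).submatrix (Tuple.sort f).symm id := by
      simp [submatrix_submatrix, Function.comp_assoc]
    rw [hperm, det_permute]
    exact (hd _ hmono).mul_left _
  · obtain ⟨a, b, hab, hne⟩ : ∃ a b, f a = f b ∧ a ≠ b := by
      simpa [Function.Injective] using hf
    rw [det_zero_of_row_eq hne (funext fun j => by simp [hab])]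
    exact dvd_zero d

theorem dvd_det_mul_of_forall_strictMono {k : ℕ} {α : Type*} [Fintype α] [LinearOrder α]
    (K : Matrix (Fin k) α R) (E : Matrix α (Fin k) R) {d : R}
    (hd : ∀ ρ : Fin k → α, StrictMono ρ → d ∣ (E.submatrix ρ id).det) :
    d ∣ (K * E).det := by
  rw [det_mul_eq_sum_prod_mul_det_submatrix]
  exact Finset.dvd_sum fun f _ => (dvd_det_submatrix_of_forall_strictMono hd f).mul_left _

theorem exists_mul_eq_one_of_sum_det_submatrix_mul_eq_one {m n : Type*} [Fintype m]
    [DecidableEq m] [Fintype n] [DecidableEq n] (E : Matrix n m R) (s : Finset (m ↪ n))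
    (c : (m ↪ n) → R) (hc : ∑ ρ ∈ s, (E.submatrix ρ id).det * c ρ = 1) :
    ∃ K : Matrix m n R, K * E = 1 := by
  refine ⟨∑ ρ ∈ s, c ρ • ((E.submatrix ρ id).adjugate * (1 : Matrix n n R).submatrix ρ id), ?_⟩
  have hselect : ∀ ρ : m ↪ n, (1 : Matrix n n R).submatrix ρ id * E = E.submatrix ρ id :=
    fun ρ => by simpa using one_submatrix_mul ρ (Equiv.refl n) E
  rw [Matrix.sum_mul]
  simp_rw [Matrix.smul_mul, Matrix.mul_assoc, hselect, adjugate_mul, smul_smul]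
  rw [← Finset.sum_smul]
  simp_rw [mul_comm (c _)]
  rw [hc, one_smul]

end Matrix

theorem stmt7_general {k ℓ : ℕ} (E : Matrix (Fin ℓ) (Fin k) ℤ) :
    (∃ K : Matrix (Fin k) (Fin ℓ) ℤ, K * E = (1 : Matrix (Fin k) (Fin k) ℤ)) ↔
      Finset.gcd (Finset.univ.filter (fun ρ : Fin k ↪ Fin ℓ => StrictMono ρ))
        (fun ρ => (E.submatrix ρ id).det) = 1 := by
  constructor
  · rintro ⟨K, hK⟩
    refine Finset.normalize_gcd.symm.trans (normalize_eq_one.2 (isUnit_of_dvd_one ?_))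
    rw [← det_one (n := Fin k), ← hK]
    exact dvd_det_mul_of_forall_strictMono K E fun ρ hρ =>
      Finset.gcd_dvd ((Finset.mem_filter_univ (⟨ρ, hρ.injective⟩ : Fin k ↪ Fin ℓ)).2 hρ)
  · intro hgcd
    obtain ⟨c, hc⟩ := Finset.gcd_eq_sum_mul _ fun ρ : Fin k ↪ Fin ℓ => (E.submatrix ρ id).det
    exact exists_mul_eq_one_of_sum_det_submatrix_mul_eq_one E _ c (hc ▸ hgcd)

/-- An `ℓ × k` integer matrix `E` with `k ≤ ℓ` has a left inverse integer
matrix (`K * E = I_k`) iff the gcd of the determinants of all full square submatrices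
of `E` equals `1`. -/
theorem stmt7 {k ℓ : ℕ} (hkl : k ≤ ℓ) (E : Matrix (Fin ℓ) (Fin k) ℤ) :
    (∃ K : Matrix (Fin k) (Fin ℓ) ℤ, K * E = (1 : Matrix (Fin k) (Fin k) ℤ)) ↔
      Finset.gcd (Finset.univ.filter (fun ρ : Fin k ↪ Fin ℓ => StrictMono ρ))
        (fun ρ => (E.submatrix ρ id).det) = 1 :=
  stmt7_general E
end
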